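/- For the three-dimensional dust system (γ = 1): Σ' = -Σ(A(AC₂v + v² + 1) + v)/v, A' = -C₂A³ + AΣ(C₂Σ + 2) + A, v' = (v² - 1)(Av - Σ)/v, with C₂ > 0, the point (Σ,A,v) = (0, 1/√C₂, -1) is an equilibrium whose Jacobian has eigenvalues {-2/√C₂, 2/√C₂ - 2, -2}; hence it is a hyperbolic sink for C₂ > 1, a hyperbolic saddle for 0 < C₂ < 1, and non-hyperbolic for C₂ = 1. -/

import Mathlib

/-!
With `C₂ s² = 1` the point `(0, s, -1)` is an equilibrium, and the Jacobian there has the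
eigenvectors `(0, 0, 1)`, `(0, 1, 0)` and `(1, 1, 0)`. Each is checked by restricting the field
to the line through the equilibrium in that direction, where it becomes an explicit function of
one variable whose derivative at `0` is a multiple of the direction; taking `s = 1/√C₂` gives the
eigenvalues `-2/√C₂`, `-2` and `2/√C₂ - 2`, and the signs follow from comparing `√C₂` with `1`.
-/

noncomputable section

/-- Three-dimensional dust system (γ = 1) in the variables `(Σ, A, v)`:
`Σ' = -Σ(A(AC₂v + v² + 1) + v)/v`, `A' = -C₂A³ + AΣ(C₂Σ + 2) + A`,
`v' = (v² - 1)(Av - Σ)/v`. -/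
def Fdust (C₂ : ℝ) : ℝ × ℝ × ℝ → ℝ × ℝ × ℝ := fun p =>
  let S := p.1; let A := p.2.1; let v := p.2.2
  (-S * (A * (A * C₂ * v + v ^ 2 + 1) + v) / v,
   -C₂ * A ^ 3 + A * S * (C₂ * S + 2) + A,
   (v ^ 2 - 1) * (A * v - S) / v)

open Module.End

theorem hasEigenvalue_fderiv_of_hasLineDerivAt {𝕜 E : Type*}
    [NontriviallyNormedField 𝕜] [NormedAddCommGroup E] [NormedSpace 𝕜 E]
    {f : E → E} {p w : E} {μ : 𝕜} (hf : DifferentiableAt 𝕜 f p) (hw : w ≠ 0)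
    (h : HasLineDerivAt 𝕜 f (μ • w) p w) :
    HasEigenvalue (fderiv 𝕜 f p).toLinearMap μ :=
  hasEigenvalue_of_hasEigenvector
    ⟨mem_eigenspace_iff.mpr ((hf.hasFDerivAt.hasLineDerivAt w).unique h), hw⟩

theorem differentiableAt_Fdust (C₂ : ℝ) {p : ℝ × ℝ × ℝ} (hv : p.2.2 ≠ 0) :
    DifferentiableAt ℝ (Fdust C₂) p := by
  unfold Fdust
  fun_prop (disch := exact hv)

section Equilibrium

variable {C₂ s : ℝ}

theorem Fdust_eq_zero_of_mul_sq_eq_one (hs : C₂ * s ^ 2 = 1) : Fdust C₂ (0, s, -1) = 0 := by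
  simp only [Fdust, Prod.ext_iff, Prod.fst_zero, Prod.snd_zero]
  refine ⟨by simp, ?_, by simp⟩
  linear_combination (-s) * hs

theorem hasEigenvalue_fderiv_Fdust_neg_two_mul (hs : C₂ * s ^ 2 = 1) :
    HasEigenvalue (fderiv ℝ (Fdust C₂) (0, s, -1)).toLinearMap (-2 * s) := by
  refine hasEigenvalue_fderiv_of_hasLineDerivAt (differentiableAt_Fdust C₂ (by norm_num))
    (w := (0, 0, 1)) (by simp) ?_
  have hv : HasDerivAt (fun t : ℝ => s * (t ^ 2 - 2 * t)) (-2 * s) 0 :=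
    ((((hasDerivAt_id' (0 : ℝ)).pow 2).sub ((hasDerivAt_id' 0).const_mul 2)).const_mul s).congr_deriv
      (by norm_num; ring)
  have hv_ne : ∀ᶠ t : ℝ in nhds 0, -1 + t ≠ 0 :=
    (continuousAt_const.add continuousAt_id).eventually_ne (by norm_num)
  -- the `v`-component is a polynomial divided by `v`, so it is polynomial only away from `v = 0`
  have hline : (fun t : ℝ => ((0 : ℝ), (0 : ℝ), s * (t ^ 2 - 2 * t))) =ᶠ[nhds 0]
      fun t => Fdust C₂ ((0, s, -1) + t • (0, 0, 1)) := by
    filter_upwards [hv_ne] with t ht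
    simp only [Fdust, Prod.mk_add_mk, Prod.smul_mk, smul_eq_mul, Prod.mk.injEq]
    refine ⟨by simp, by linear_combination s * hs, ?_⟩
    field_simp
    ring
  have hval : (-2 * s) • ((0 : ℝ), (0 : ℝ), (1 : ℝ)) = (0, 0, -2 * s) := by simp
  rw [HasLineDerivAt, hval]
  exact ((hasDerivAt_const (0 : ℝ) (0 : ℝ)).prodMk
    ((hasDerivAt_const (0 : ℝ) (0 : ℝ)).prodMk hv)).congr_of_eventuallyEq hline.symm

theorem hasEigenvalue_fderiv_Fdust_neg_two (hs : C₂ * s ^ 2 = 1) :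
    HasEigenvalue (fderiv ℝ (Fdust C₂) (0, s, -1)).toLinearMap (-2) := by
  refine hasEigenvalue_fderiv_of_hasLineDerivAt (differentiableAt_Fdust C₂ (by norm_num))
    (w := (0, 1, 0)) (by simp) ?_
  have hst := (hasDerivAt_id' (0 : ℝ)).const_add s
  have hA : HasDerivAt (fun t : ℝ => (s + t) * (1 - C₂ * (s + t) ^ 2)) (-2) 0 :=
    (hst.mul (((hst.pow 2).const_mul C₂).const_sub 1)).congr_deriv
      (by norm_num; linear_combination -3 * hs)
  have hline : (fun t : ℝ => Fdust C₂ ((0, s, -1) + t • (0, 1, 0))) =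
      fun t => (0, (s + t) * (1 - C₂ * (s + t) ^ 2), 0) := by
    funext t
    simp only [Fdust, Prod.mk_add_mk, Prod.smul_mk, smul_eq_mul, Prod.mk.injEq]
    refine ⟨by ring, by ring, by ring⟩
  have hval : (-2 : ℝ) • ((0 : ℝ), (1 : ℝ), (0 : ℝ)) = (0, -2, 0) := by simp
  rw [HasLineDerivAt, hline, hval]
  exact (hasDerivAt_const (0 : ℝ) (0 : ℝ)).prodMk (hA.prodMk (hasDerivAt_const (0 : ℝ) (0 : ℝ)))

theorem hasEigenvalue_fderiv_Fdust_two_mul_sub_two (hs : C₂ * s ^ 2 = 1) :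
    HasEigenvalue (fderiv ℝ (Fdust C₂) (0, s, -1)).toLinearMap (2 * s - 2) := by
  refine hasEigenvalue_fderiv_of_hasLineDerivAt (differentiableAt_Fdust C₂ (by norm_num))
    (w := (1, 1, 0)) (by simp) ?_
  have hst := (hasDerivAt_id' (0 : ℝ)).const_add s
  have ht := hasDerivAt_id' (0 : ℝ)
  have hS : HasDerivAt (fun t : ℝ => t * ((s + t) * (2 - C₂ * (s + t)) - 1)) (2 * s - 2) 0 :=
    (ht.mul ((hst.mul ((hst.const_mul C₂).const_sub 2)).sub_const 1)).congr_deriv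
      (by norm_num; linear_combination -hs)
  have hA : HasDerivAt (fun t : ℝ => (s + t) * (1 - C₂ * (s + t) ^ 2) + (s + t) * t * (C₂ * t + 2))
      (2 * s - 2) 0 :=
    ((hst.mul (((hst.pow 2).const_mul C₂).const_sub 1)).add
      ((hst.mul ht).mul ((ht.const_mul C₂).add_const 2))).congr_deriv
      (by norm_num; linear_combination -3 * hs)
  have hline : (fun t : ℝ => Fdust C₂ ((0, s, -1) + t • (1, 1, 0))) =
      fun t => (t * ((s + t) * (2 - C₂ * (s + t)) - 1),
        (s + t) * (1 - C₂ * (s + t) ^ 2) + (s + t) * t * (C₂ * t + 2), 0) := by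
    funext t
    simp only [Fdust, Prod.mk_add_mk, Prod.smul_mk, smul_eq_mul, Prod.mk.injEq]
    refine ⟨by ring, by ring, by ring⟩
  have hval : (2 * s - 2) • ((1 : ℝ), (1 : ℝ), (0 : ℝ)) = (2 * s - 2, 2 * s - 2, 0) := by simp
  rw [HasLineDerivAt, hline, hval]
  exact hS.prodMk (hA.prodMk (hasDerivAt_const (0 : ℝ) (0 : ℝ)))

end Equilibrium

/-- The point `(Σ, A, v) = (0, 1/√C₂, -1)` is an equilibrium of the dust system
whose Jacobian has eigenvalues `{-2/√C₂, 2/√C₂ - 2, -2}`; hence it is a hyperbolic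
sink for `C₂ > 1`, a hyperbolic saddle for `0 < C₂ < 1`, and non-hyperbolic for
`C₂ = 1`. -/
theorem P6_dust_stability (C₂ : ℝ) (hC : 0 < C₂) :
    Fdust C₂ (0, 1 / Real.sqrt C₂, -1) = 0 ∧
    Module.End.HasEigenvalue
      ((fderiv ℝ (Fdust C₂) (0, 1 / Real.sqrt C₂, -1)).toLinearMap)
      (-2 / Real.sqrt C₂) ∧
    Module.End.HasEigenvalue
      ((fderiv ℝ (Fdust C₂) (0, 1 / Real.sqrt C₂, -1)).toLinearMap)
      (2 / Real.sqrt C₂ - 2) ∧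
    Module.End.HasEigenvalue
      ((fderiv ℝ (Fdust C₂) (0, 1 / Real.sqrt C₂, -1)).toLinearMap) (-2) ∧
    -2 / Real.sqrt C₂ < 0 ∧ (-2 : ℝ) < 0 ∧
    (1 < C₂ → 2 / Real.sqrt C₂ - 2 < 0) ∧
    (C₂ < 1 → 0 < 2 / Real.sqrt C₂ - 2) ∧
    (C₂ = 1 → 2 / Real.sqrt C₂ - 2 = 0) := by
  have hsqrt : 0 < Real.sqrt C₂ := Real.sqrt_pos.mpr hC
  have hs : C₂ * (1 / Real.sqrt C₂) ^ 2 = 1 := by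
    rw [div_pow, Real.sq_sqrt hC.le]
    field_simp
  have hneg : -2 / Real.sqrt C₂ = -2 * (1 / Real.sqrt C₂) := by ring
  have hmid : 2 / Real.sqrt C₂ - 2 = 2 * (1 / Real.sqrt C₂) - 2 := by ring
  refine ⟨Fdust_eq_zero_of_mul_sq_eq_one hs, hneg ▸ hasEigenvalue_fderiv_Fdust_neg_two_mul hs,
    hmid ▸ hasEigenvalue_fderiv_Fdust_two_mul_sub_two hs, hasEigenvalue_fderiv_Fdust_neg_two hs,
    div_neg_of_neg_of_pos (by norm_num) hsqrt, by norm_num, fun h => ?_, fun h => ?_, ?_⟩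
  · have h1 : 1 < Real.sqrt C₂ := by simpa using Real.sqrt_lt_sqrt zero_le_one h
    linarith [div_lt_self two_pos h1]
  · have h1 : Real.sqrt C₂ < 1 := by simpa using Real.sqrt_lt_sqrt hC.le h
    linarith [(lt_div_iff₀ hsqrt).mpr (by linarith : 2 * Real.sqrt C₂ < 2)]
  · rintro rfl
    norm_num
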